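/- arXiv:1410.5361 — 12 statements merged into one kernel-verified Lean document; each statement's English description precedes it below -/
import Mathlib

section
/- Let W be an n × n real matrix such that every off-diagonal entry of W is nonnegative, every diagonal entry is nonpositive, and each row of W sums to zero. Then there exists a nonzero vector c ∈ ℝ^n with c ≥ 0 (componentwise) such that W^T c = 0. -/
/-!
By Gordan's alternative (a separation argument for the image of the standard simplex under
`c ↦ c ᵥ* W`), either some `c` in the standard simplex satisfies `c ᵥ* W = 0`, or `W *ᵥ y > 0`
for some `y`. The second is impossible: at an index `i` where `y` is maximal, the zero row sum
gives `(W *ᵥ y) i = ∑ j, W i j * (y j - y i)`, a sum of nonpositive terms.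
-/

open Matrix

variable {ι κ : Type*} [Fintype ι] [Fintype κ]

/-- Gordan's alternative. -/
theorem exists_mem_stdSimplex_vecMul_eq_zero_or_exists_mulVec_pos (A : Matrix ι κ ℝ) :
    (∃ c ∈ stdSimplex ℝ ι, c ᵥ* A = 0) ∨ ∃ y : κ → ℝ, ∀ i, 0 < (A *ᵥ y) i := by
  classical
  set K := vecMulLinear A '' stdSimplex ℝ ι
  by_cases h0 : (0 : κ → ℝ) ∈ K
  · exact Or.inl h0
  have hK : IsCompact K :=
    (isCompact_stdSimplex ℝ ι).image (vecMulLinear A).continuous_of_finiteDimensional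
  obtain ⟨f, u, hu0, hu⟩ :=
    geometric_hahn_banach_point_closed ((convex_stdSimplex ℝ ι).linear_image _) hK.isClosed h0
  refine Or.inr ⟨fun j ↦ f (Pi.single j 1), fun i ↦ ?_⟩
  have hrow : A i ∈ K := ⟨Pi.single i 1, single_mem_stdSimplex ℝ i, single_one_vecMul i A⟩
  have hf : f (A i) = (A *ᵥ fun j ↦ f (Pi.single j 1)) i := by
    conv_lhs => rw [← Finset.univ_sum_single (A i)]
    simp only [map_sum, mulVec, dotProduct]
    refine Finset.sum_congr rfl fun j _ ↦ ?_
    rw [← smul_eq_mul, ← map_smul, ← Pi.single_smul, smul_eq_mul, mul_one]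
  rw [← hf]
  exact (map_zero f ▸ hu0).trans (hu _ hrow)

theorem not_forall_mulVec_pos_of_nonneg_offDiag_of_row_sum_eq_zero [Nonempty ι]
    {W : Matrix ι ι ℝ} (hoff : ∀ i j, i ≠ j → 0 ≤ W i j) (hrow : ∀ i, ∑ j, W i j = 0)
    (y : ι → ℝ) : ¬ ∀ i, 0 < (W *ᵥ y) i := by
  obtain ⟨i, -, hi⟩ := Finset.univ.exists_max_image y Finset.univ_nonempty
  have hWy : (W *ᵥ y) i ≤ 0 := calc
    (W *ᵥ y) i ≤ ∑ j, W i j * y i := by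
      refine Finset.sum_le_sum fun j _ ↦ ?_
      rcases eq_or_ne i j with rfl | hij
      · rfl
      · exact mul_le_mul_of_nonneg_left (hi j (Finset.mem_univ j)) (hoff i j hij)
    _ = 0 := by rw [← Finset.sum_mul, hrow i, zero_mul]
  exact fun h ↦ (h i).not_ge hWy

theorem stmt_1_general (n : ℕ) (hn : 0 < n) (W : Matrix (Fin n) (Fin n) ℝ)
    (hoff : ∀ i j, i ≠ j → 0 ≤ W i j)
    (hrow : ∀ i, ∑ j, W i j = 0) :
    ∃ c : Fin n → ℝ, c ≠ 0 ∧ (∀ i, 0 ≤ c i) ∧ Wᵀ.mulVec c = 0 := by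
  have : Nonempty (Fin n) := ⟨⟨0, hn⟩⟩
  obtain ⟨c, ⟨hc_nonneg, hc_sum⟩, hc⟩ :=
    (exists_mem_stdSimplex_vecMul_eq_zero_or_exists_mulVec_pos W).resolve_right fun ⟨y, hy⟩ ↦
      not_forall_mulVec_pos_of_nonneg_offDiag_of_row_sum_eq_zero hoff hrow y hy
  refine ⟨c, fun hc_zero ↦ ?_, hc_nonneg, by rwa [mulVec_transpose]⟩
  simp [hc_zero] at hc_sum

/-- If W has nonnegative off-diagonal entries, nonpositive diagonal entries and zero
row sums, then there is a nonzero nonnegative c with Wᵀ c = 0. -/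
theorem stmt_1 (n : ℕ) (hn : 0 < n) (W : Matrix (Fin n) (Fin n) ℝ)
    (hoff : ∀ i j, i ≠ j → 0 ≤ W i j)
    (hdiag : ∀ i, W i i ≤ 0)
    (hrow : ∀ i, ∑ j, W i j = 0) :
    ∃ c : Fin n → ℝ, c ≠ 0 ∧ (∀ i, 0 ≤ c i) ∧ Wᵀ.mulVec c = 0 :=
  stmt_1_general n hn W hoff hrow
end

section
/- (Gordan's Theorem) For any real m × n matrix M, exactly one of the following holds: either there exists a nonzero vector x ∈ ℝ^n with x ≥ 0 componentwise and Mx = 0, or there exists y ∈ ℝ^m such that every entry of M^T y is strictly positive. -/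
/-!
If `x ≥ 0` is nonzero with `M x = 0` and `Mᵀ y > 0`, then `0 = (M x) ⬝ y = x ⬝ (Mᵀ y) > 0`, so the
two alternatives exclude each other. If no `y` has `Mᵀ y > 0`, then `0` lies in the convex hull of
the columns of `M`: otherwise a hyperplane strictly separates `0` from that (compact) hull, and
its normal vector is such a `y`. Barycentric coordinates of `0` with respect to the columns are
then a nonzero, nonnegative `x` with `M x = 0`.
-/

open Matrix Set

theorem convexHull_range_eq_image_stdSimplex {R E ι : Type*} [Field R] [LinearOrder R]
    [IsStrictOrderedRing R] [AddCommGroup E] [Module R E] [Fintype ι] (v : ι → E) :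
    convexHull R (range v) = Fintype.linearCombination R v '' stdSimplex R ι := by
  classical
  rw [← convexHull_rangle_single_eq_stdSimplex, LinearMap.image_convexHull, ← range_comp]
  congr 2
  ext i
  simp [Fintype.linearCombination_apply_single]

theorem exists_forall_dotProduct_pos_of_zero_notMem_convexHull {ι κ : Type*} [Fintype ι]
    [Fintype κ] {v : ι → κ → ℝ} (h : 0 ∉ convexHull ℝ (range v)) :
    ∃ y : κ → ℝ, ∀ i, 0 < y ⬝ᵥ v i := by
  classical
  obtain ⟨f, u, hu, hf⟩ := geometric_hahn_banach_point_closed (convex_convexHull ℝ _)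
    ((finite_range v).isClosed_convexHull (𝕜 := ℝ)) h
  refine ⟨(dotProductEquiv ℝ κ).symm f.toLinearMap, fun i => ?_⟩
  have hfv : u < f (v i) := hf _ (subset_convexHull ℝ _ (mem_range_self i))
  rw [map_zero] at hu
  have hdot : (dotProductEquiv ℝ κ).symm f.toLinearMap ⬝ᵥ v i = f (v i) :=
    LinearMap.congr_fun ((dotProductEquiv ℝ κ).apply_symm_apply f.toLinearMap) (v i)
  linarith

theorem dotProduct_pos_of_nonneg_of_ne_zero {R κ : Type*} [Semiring R] [PartialOrder R]
    [IsStrictOrderedRing R] [Fintype κ] {x z : κ → R} (hx : ∀ i, 0 ≤ x i) (hx0 : x ≠ 0)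
    (hz : ∀ i, 0 < z i) : 0 < x ⬝ᵥ z := by
  obtain ⟨i, hi⟩ := Function.ne_iff.mp hx0
  exact Finset.sum_pos' (fun j _ => mul_nonneg (hx j) (hz j).le)
    ⟨i, Finset.mem_univ i, mul_pos ((hx i).lt_of_ne' hi) (hz i)⟩

namespace Matrix

variable {ι κ : Type*} [Fintype ι] [Fintype κ]

theorem not_forall_transpose_mulVec_pos_of_mulVec_eq_zero {M : Matrix ι κ ℝ} {x : κ → ℝ}
    (hx : ∀ i, 0 ≤ x i) (hx0 : x ≠ 0) (hMx : M *ᵥ x = 0) (y : ι → ℝ) :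
    ¬ ∀ j, 0 < (Mᵀ *ᵥ y) j := fun hy => by
  have hpos := dotProduct_pos_of_nonneg_of_ne_zero hx hx0 hy
  rw [dotProduct_mulVec, vecMul_transpose, hMx, zero_dotProduct] at hpos
  exact lt_irrefl 0 hpos

theorem exists_nonneg_mulVec_eq_zero_of_not_exists_transpose_mulVec_pos {M : Matrix ι κ ℝ}
    (h : ¬ ∃ y : ι → ℝ, ∀ j, 0 < (Mᵀ *ᵥ y) j) :
    ∃ x : κ → ℝ, x ≠ 0 ∧ (∀ i, 0 ≤ x i) ∧ M *ᵥ x = 0 := by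
  have h0 : (0 : ι → ℝ) ∈ convexHull ℝ (range fun j => Mᵀ j) := by
    by_contra h0
    obtain ⟨y, hy⟩ := exists_forall_dotProduct_pos_of_zero_notMem_convexHull h0
    exact h ⟨y, fun j => (hy j).trans_eq (dotProduct_comm _ _)⟩
  rw [convexHull_range_eq_image_stdSimplex] at h0
  obtain ⟨x, ⟨hx, hx1⟩, hMx⟩ := h0
  refine ⟨x, fun hx0 => ?_, hx, ?_⟩
  · simp [hx0] at hx1
  · simpa [mulVec_eq_sum, Fintype.linearCombination_apply] using hMx

end Matrix

/-- Gordan's theorem: exactly one of the two alternatives holds. -/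
theorem stmt_2 (m n : ℕ) (M : Matrix (Fin m) (Fin n) ℝ) :
    Xor' (∃ x : Fin n → ℝ, x ≠ 0 ∧ (∀ i, 0 ≤ x i) ∧ M.mulVec x = 0)
         (∃ y : Fin m → ℝ, ∀ j, 0 < Mᵀ.mulVec y j) := by
  by_cases hy : ∃ y : Fin m → ℝ, ∀ j, 0 < Mᵀ.mulVec y j
  · refine Or.inr ⟨hy, fun ⟨x, hx0, hx, hMx⟩ => ?_⟩
    obtain ⟨y, hy⟩ := hy
    exact not_forall_transpose_mulVec_pos_of_mulVec_eq_zero hx hx0 hMx y hy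
  · exact Or.inl ⟨exists_nonneg_mulVec_eq_zero_of_not_exists_transpose_mulVec_pos hy, hy⟩
end

section
/- Let A be a tensor in ℝ^(n^m) with m ≥ 2, and suppose (x, λ) and (x', λ') are both tropical H-eigenpairs of A. Then λ = λ'. That is, the tropical H-eigenvalue of a real tensor is unique. -/
/-!
The min-plus map `F x i = min_t (A i t + ∑ j, x (t j))` is monotone and shifts by `k c` when `x`
is shifted by the constant `c`. Given eigenvectors `x` and `y`, let `c = x i - y i` be the largest
coordinate of `x - y`. Then `x ≤ y + c`, so at the coordinate `i` the eigen-equations give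
`λ + k x i = F x i ≤ F y i + k c = μ + k x i`, i.e. `λ ≤ μ`; by symmetry `λ = μ`.
-/

open Finset

theorem eigenvalue_le_of_monotone_of_map_add_const {ι : Type*} [Finite ι] [Nonempty ι]
    (F : (ι → ℝ) → ι → ℝ) (d : ℝ) (hF : Monotone F)
    (hF_add : ∀ x (c : ℝ), F (x + fun _ => c) = F x + fun _ => d * c)
    {x y : ι → ℝ} {lam mu : ℝ} (hx : ∀ i, F x i = lam + d * x i)
    (hy : ∀ i, F y i = mu + d * y i) : lam ≤ mu := by
  obtain ⟨i, hi⟩ := Finite.exists_max (x - y)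
  have hxy : x ≤ y + fun _ => x i - y i := fun j => by
    have := hi j
    simp only [Pi.sub_apply, Pi.add_apply] at this ⊢
    linarith
  have key := congrFun (hF_add y (x i - y i)) i ▸ hF hxy i
  simp only [Pi.add_apply, hx, hy] at key
  linarith

theorem eigenvalue_eq_of_monotone_of_map_add_const {ι : Type*} [Finite ι] [Nonempty ι]
    (F : (ι → ℝ) → ι → ℝ) (d : ℝ) (hF : Monotone F)
    (hF_add : ∀ x (c : ℝ), F (x + fun _ => c) = F x + fun _ => d * c)
    {x y : ι → ℝ} {lam mu : ℝ} (hx : ∀ i, F x i = lam + d * x i)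
    (hy : ∀ i, F y i = mu + d * y i) : lam = mu :=
  le_antisymm (eigenvalue_le_of_monotone_of_map_add_const F d hF hF_add hx hy)
    (eigenvalue_le_of_monotone_of_map_add_const F d hF hF_add hy hx)

section TropicalTensorMap

variable {ι κ : Type*} [Fintype ι] [Nonempty ι] [Fintype κ] [DecidableEq κ]

/-- The min-plus action of the tensor `A`, of order `card κ + 1`, on `x`. -/
noncomputable def tropicalTensorMap (A : ι → (κ → ι) → ℝ) (x : ι → ℝ) (i : ι) : ℝ :=
  univ.inf' univ_nonempty fun t => A i t + ∑ j, x (t j)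

theorem tropicalTensorMap_mono (A : ι → (κ → ι) → ℝ) : Monotone (tropicalTensorMap A) :=
  fun _ _ hxy i => inf'_mono_fun fun _ _ => by gcongr; exact hxy _

theorem tropicalTensorMap_add_const (A : ι → (κ → ι) → ℝ) (x : ι → ℝ) (c : ℝ) :
    tropicalTensorMap A (x + fun _ => c) = tropicalTensorMap A x + fun _ => Fintype.card κ * c := by
  ext i
  simp only [tropicalTensorMap, Pi.add_apply, sum_add_distrib, sum_const, card_univ, nsmul_eq_mul,
    ← add_assoc]
  exact (map_finset_inf' (OrderIso.addRight _) _ _).symm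

end TropicalTensorMap

theorem stmt_4_general (n k : ℕ) (hn : 0 < n)
    (A : Fin n → (Fin k → Fin n) → ℝ)
    (x x' : Fin n → ℝ) (lam lam' : ℝ)
    (heig : ∀ i : Fin n,
      Finset.univ.inf' ⟨fun _ => ⟨0, hn⟩, Finset.mem_univ _⟩
        (fun t : Fin k → Fin n => A i t + ∑ j, x (t j)) = lam + (k : ℝ) * x i)
    (heig' : ∀ i : Fin n,
      Finset.univ.inf' ⟨fun _ => ⟨0, hn⟩, Finset.mem_univ _⟩
        (fun t : Fin k → Fin n => A i t + ∑ j, x' (t j)) = lam' + (k : ℝ) * x' i) :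
    lam = lam' := by
  have : Nonempty (Fin n) := ⟨⟨0, hn⟩⟩
  have hmap_add := tropicalTensorMap_add_const A (κ := Fin k)
  rw [Fintype.card_fin] at hmap_add
  exact eigenvalue_eq_of_monotone_of_map_add_const (tropicalTensorMap A) k
    (tropicalTensorMap_mono A) hmap_add heig heig'

/-- Uniqueness of the tropical H-eigenvalue of a real tensor.
A tensor of order `k+1 ≥ 2` and rank `n` is `A : Fin n → (Fin k → Fin n) → ℝ`. -/
theorem stmt_4 (n k : ℕ) (hn : 0 < n) (hk : 1 ≤ k)
    (A : Fin n → (Fin k → Fin n) → ℝ)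
    (x x' : Fin n → ℝ) (lam lam' : ℝ)
    (heig : ∀ i : Fin n,
      Finset.univ.inf' ⟨fun _ => ⟨0, hn⟩, Finset.mem_univ _⟩
        (fun t : Fin k → Fin n => A i t + ∑ j, x (t j)) = lam + (k : ℝ) * x i)
    (heig' : ∀ i : Fin n,
      Finset.univ.inf' ⟨fun _ => ⟨0, hn⟩, Finset.mem_univ _⟩
        (fun t : Fin k → Fin n => A i t + ∑ j, x' (t j)) = lam' + (k : ℝ) * x' i) :
    lam = lam' :=
  stmt_4_general n k hn A x x' lam lam' heig heig'
end

section
/- Every tensor A ∈ ℝ^(n^m) with n ≥ 1 and m ≥ 2 admits a tropical H-eigenpair: there exist x ∈ ℝ^n and λ ∈ ℝ such that for every i ∈ [n], min over (i2,...,im) ∈ [n]^{m-1} of (a_{i i2...im} + x_{i2} + ... + x_{im}) = λ + (m-1)·x_i. -/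
/-!
Dividing the min-plus map `F x i = min_t (A i t + ∑ j, x (t j))` by `k` gives a map `T` that is
monotone and commutes with adding constants, hence is nonexpansive for the sup norm. The diagonal
indices `t = (j, …, j)` moreover bound the oscillation `max T x - min T x` uniformly in `x`.
Instead of Brouwer's theorem on `ℝⁿ / ℝ` we use a vanishing discount: for `α < 1` the map
`x ↦ T (α • x)` is a contraction, and its fixed point, normalised to vanish at one coordinate,
gives `z` with `T (α • z) = z + c` and `‖z‖` bounded independently of `α`. A limit point of these
`z` as `α → 1` is an additive eigenvector of `T`.
-/

open Function Filter Topology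

section AdditivelyHomogeneous

variable {ι : Type*} [Fintype ι] {T : (ι → ℝ) → ι → ℝ}

theorem LipschitzWith.of_monotone_of_map_add_const (hmono : Monotone T)
    (hadd : ∀ x c, T (x + const ι c) = T x + const ι c) : LipschitzWith 1 T := by
  have key : ∀ x y i, T x i ≤ T y i + dist x y := by
    intro x y i
    have hle : x ≤ y + const ι (dist x y) := fun j => by
      have := (le_abs_self (x j - y j)).trans (dist_le_pi_dist x y j)
      simp only [Pi.add_apply, const_apply]
      linarith
    simpa [hadd] using hmono hle i
  refine LipschitzWith.of_dist_le_mul fun x y => ?_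
  rw [NNReal.coe_one, one_mul, dist_pi_le_iff dist_nonneg]
  intro i
  rw [Real.dist_eq, abs_sub_le_iff]
  constructor <;> linarith [key x y i, key y x i, dist_comm x y]

theorem exists_map_smul_eq_self (hmono : Monotone T)
    (hadd : ∀ x c, T (x + const ι c) = T x + const ι c) {α : ℝ} (h0 : 0 ≤ α) (h1 : α < 1) :
    ∃ x, T (α • x) = x := by
  have hlip : LipschitzWith ⟨α, h0⟩ (T ∘ (α • ·)) := by
    have := (LipschitzWith.of_monotone_of_map_add_const hmono hadd).comp
      (lipschitzWith_smul (β := ι → ℝ) α)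
    rwa [Real.nnnorm_of_nonneg h0, one_mul] at this
  have hc : ContractingWith ⟨α, h0⟩ (T ∘ (α • ·)) := ⟨by exact_mod_cast h1, hlip⟩
  exact ⟨hc.fixedPoint _, hc.fixedPoint_isFixedPt⟩

theorem exists_norm_le_map_smul_eq_add_const (hmono : Monotone T)
    (hadd : ∀ x c, T (x + const ι c) = T x + const ι c) {C : ℝ}
    (hC : ∀ x i j, T x i ≤ T x j + C) {α : ℝ} (h0 : 0 ≤ α) (h1 : α < 1) (i₀ : ι) :
    ∃ z : ι → ℝ, ‖z‖ ≤ C ∧ ∃ c, T (α • z) = z + const ι c := by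
  obtain ⟨x, hx⟩ := exists_map_smul_eq_self hmono hadd h0 h1
  refine ⟨x + const ι (-x i₀), ?_, x i₀ - α * x i₀, ?_⟩
  · refine (pi_norm_le_iff_of_nonneg (by linarith [hC 0 i₀ i₀])).2 fun i => ?_
    have h₁ := hC (α • x) i i₀
    have h₂ := hC (α • x) i₀ i
    rw [hx] at h₁ h₂
    simp only [Pi.add_apply, const_apply, Real.norm_eq_abs, abs_le]
    constructor <;> linarith
  · have : α • (x + const ι (-x i₀)) = α • x + const ι (-(α * x i₀)) := by
      ext
      simp only [Pi.smul_apply, Pi.add_apply, const_apply, smul_eq_mul]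
      ring
    rw [this, hadd, hx]
    ext
    simp only [Pi.add_apply, const_apply]
    ring

theorem exists_map_eq_add_const [Nonempty ι] (hmono : Monotone T)
    (hadd : ∀ x c, T (x + const ι c) = T x + const ι c) {C : ℝ}
    (hC : ∀ x i j, T x i ≤ T x j + C) :
    ∃ x c, T x = x + const ι c := by
  obtain ⟨i₀⟩ := ‹Nonempty ι›
  set α : ℕ → ℝ := fun m => m / (m + 1)
  have hα : Tendsto α atTop (𝓝 1) := tendsto_natCast_div_add_atTop 1
  choose z hz c hc using fun m : ℕ =>
    exists_norm_le_map_smul_eq_add_const hmono hadd hC (α := α m) (by positivity)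
      ((div_lt_one (by positivity)).2 (lt_add_one _)) i₀
  obtain ⟨z', -, φ, hφ, hz'⟩ := (isCompact_closedBall (0 : ι → ℝ) C).tendsto_subseq
    fun m => mem_closedBall_zero_iff.2 (hz m)
  have hT : Tendsto (fun m => T (α (φ m) • z (φ m))) atTop (𝓝 (T z')) := by
    have := (hα.comp hφ.tendsto_atTop).smul hz'
    rw [one_smul] at this
    exact ((LipschitzWith.of_monotone_of_map_add_const hmono hadd).continuous.tendsto _).comp this
  have hc' : Tendsto (fun m => c (φ m)) atTop (𝓝 (T z' i₀ - z' i₀)) := by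
    refine ((tendsto_pi_nhds.1 hT i₀).sub (tendsto_pi_nhds.1 hz' i₀)).congr fun m => ?_
    simp [hc]
  refine ⟨z', T z' i₀ - z' i₀, tendsto_nhds_unique hT ?_⟩
  simp only [hc]
  exact hz'.add (tendsto_pi_nhds.2 fun _ => hc')

end AdditivelyHomogeneous

section Tropical

variable {ι κ : Type*} [Fintype ι] [Nonempty ι] [Fintype κ] [DecidableEq κ]

noncomputable def tropicalMap (A : ι → (κ → ι) → ℝ) (x : ι → ℝ) (i : ι) : ℝ :=
  Finset.univ.inf' Finset.univ_nonempty fun t : κ → ι => A i t + ∑ j, x (t j)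

variable (A : ι → (κ → ι) → ℝ)

theorem tropicalMap_mono : Monotone (tropicalMap A) := fun x y hxy i =>
  Finset.le_inf' _ _ fun t _ => (Finset.inf'_le _ (Finset.mem_univ t)).trans <| by
    gcongr with j
    exact hxy _

theorem tropicalMap_add_const (x : ι → ℝ) (c : ℝ) :
    tropicalMap A (x + const ι c) = tropicalMap A x + const ι (Fintype.card κ * c) := by
  ext i
  simp only [tropicalMap, Pi.add_apply, const_apply, Finset.sum_add_distrib, Finset.sum_const,
    Finset.card_univ, nsmul_eq_mul, ← add_assoc]
  exact (map_finset_inf' (OrderIso.addRight _) _ _).symm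

theorem tropicalMap_le (x : ι → ℝ) (i j : ι) :
    tropicalMap A x i ≤ A i (const κ j) + Fintype.card κ * x j :=
  (Finset.inf'_le _ (Finset.mem_univ (const κ j))).trans_eq (by simp)

theorem le_tropicalMap {a b : ℝ} (hA : ∀ i t, a ≤ A i t) {x : ι → ℝ} (hx : ∀ j, b ≤ x j)
    (i : ι) : a + Fintype.card κ * b ≤ tropicalMap A x i :=
  Finset.le_inf' _ _ fun t _ => by
    have : ∑ _j : κ, b ≤ ∑ j, x (t j) := Finset.sum_le_sum fun j _ => hx (t j)
    simp only [Finset.sum_const, Finset.card_univ, nsmul_eq_mul] at this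
    linarith [hA i t]

theorem exists_tropicalMap_le_add :
    ∃ C, ∀ x i i', tropicalMap A x i ≤ tropicalMap A x i' + C := by
  obtain ⟨p, hp⟩ := Finite.exists_min (uncurry A)
  obtain ⟨q, hq⟩ := Finite.exists_max (uncurry A)
  refine ⟨uncurry A q - uncurry A p, fun x i i' => ?_⟩
  obtain ⟨j, hj⟩ := Finite.exists_min x
  have hmax : A i (const κ j) ≤ uncurry A q := hq (i, const κ j)
  linarith [tropicalMap_le A x i j, le_tropicalMap A (fun i t => hp (i, t)) hj i']

theorem exists_tropicalMap_eq [Nonempty κ] :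
    ∃ x lam, ∀ i, tropicalMap A x i = lam + Fintype.card κ * x i := by
  have hk : (0 : ℝ) < Fintype.card κ := by exact_mod_cast Fintype.card_pos
  set T : (ι → ℝ) → ι → ℝ := fun x => (Fintype.card κ : ℝ)⁻¹ • tropicalMap A x
  have hmono : Monotone T := fun x y hxy =>
    smul_le_smul_of_nonneg_left (tropicalMap_mono A hxy) (inv_nonneg.2 hk.le)
  have hadd : ∀ x c, T (x + const ι c) = T x + const ι c := fun x c => by
    ext i
    simp only [T, tropicalMap_add_const, Pi.smul_apply, Pi.add_apply, const_apply, smul_eq_mul]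
    field_simp
  obtain ⟨C, hC⟩ := exists_tropicalMap_le_add A
  have hosc : ∀ x i j, T x i ≤ T x j + (Fintype.card κ : ℝ)⁻¹ * C := fun x i j => by
    simpa [T, mul_add] using mul_le_mul_of_nonneg_left (hC x i j) (inv_nonneg.2 hk.le)
  obtain ⟨x, c, hx⟩ := exists_map_eq_add_const hmono hadd hosc
  refine ⟨x, Fintype.card κ * c, fun i => ?_⟩
  have := congrFun hx i
  simp only [T, Pi.smul_apply, smul_eq_mul, Pi.add_apply, const_apply] at this
  field_simp at this
  linarith

end Tropical

/-- Existence of a tropical H-eigenpair for every real tensor.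
A tensor of order `k+1 ≥ 2` and rank `n ≥ 1` is `A : Fin n → (Fin k → Fin n) → ℝ`. -/
theorem stmt_5 (n k : ℕ) (hn : 0 < n) (hk : 1 ≤ k)
    (A : Fin n → (Fin k → Fin n) → ℝ) :
    ∃ (x : Fin n → ℝ) (lam : ℝ), ∀ i : Fin n,
      Finset.univ.inf' ⟨fun _ => ⟨0, hn⟩, Finset.mem_univ _⟩
        (fun t : Fin k → Fin n => A i t + ∑ j, x (t j)) = lam + (k : ℝ) * x i := by
  have : Nonempty (Fin n) := ⟨⟨0, hn⟩⟩
  have : Nonempty (Fin k) := ⟨⟨0, hk⟩⟩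
  obtain ⟨x, lam, h⟩ := exists_tropicalMap_eq A
  exact ⟨x, lam, fun i => (h i).trans (by rw [Fintype.card_fin])⟩
end

section
/- Let A ∈ ℝ^(n^m) be a symmetric tensor (invariant under all permutations of its m indices), with m ≥ 2. If (x, λ) is a tropical H-eigenpair of A, then λ = min over all (i1,...,im) ∈ [n]^m of a_{i1...im}. -/
/-- For a symmetric tensor, the tropical H-eigenvalue equals the minimum entry.
A tensor of order `k+1 ≥ 2` and rank `n ≥ 1` is `A : (Fin (k+1) → Fin n) → ℝ`. -/
theorem stmt_6 (n k : ℕ) (hn : 0 < n) (hk : 1 ≤ k)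
    (A : (Fin (k + 1) → Fin n) → ℝ)
    (hsym : ∀ (σ : Equiv.Perm (Fin (k + 1))) (u : Fin (k + 1) → Fin n), A (u ∘ σ) = A u)
    (x : Fin n → ℝ) (lam : ℝ)
    (heig : ∀ i : Fin n,
      Finset.univ.inf' ⟨fun _ => ⟨0, hn⟩, Finset.mem_univ _⟩
        (fun t : Fin k → Fin n => A (Fin.cons i t) + ∑ j, x (t j)) = lam + (k : ℝ) * x i) :
    lam = Finset.univ.inf' ⟨fun _ => ⟨0, hn⟩, Finset.mem_univ _⟩ A := by
  refine le_antisymm ?_ ?_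
  · -- lam ≤ min A : show lam ≤ A u for every u
    apply Finset.le_inf'
    intro u _
    obtain ⟨j0, -, hj0⟩ := Finset.exists_max_image Finset.univ (fun j => x (u j))
      ⟨0, Finset.mem_univ _⟩
    set σ : Equiv.Perm (Fin (k+1)) := Equiv.swap 0 j0 with hσ
    set u' : Fin (k+1) → Fin n := u ∘ σ with hu'
    have hAu' : A u' = A u := hsym σ u
    have h0 : u' 0 = u j0 := by simp [hu', hσ, Equiv.swap_apply_left]
    have hcons : Fin.cons (u j0) (Fin.tail u') = u' := by
      rw [← h0]; exact Fin.cons_self_tail u'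
    have key := heig (u j0)
    have hle : lam + (k:ℝ) * x (u j0) ≤ A u' + ∑ j : Fin k, x (Fin.tail u' j) := by
      rw [← key, ← hcons]
      exact Finset.inf'_le _ (Finset.mem_univ (Fin.tail u'))
    have hsum : ∑ j : Fin k, x (Fin.tail u' j) ≤ (k:ℝ) * x (u j0) := by
      calc ∑ j : Fin k, x (Fin.tail u' j) ≤ ∑ _j : Fin k, x (u j0) :=
            Finset.sum_le_sum (fun j _ => hj0 _ (Finset.mem_univ _))
        _ = (k:ℝ) * x (u j0) := by simp [mul_comm]
    linarith
  · -- min A ≤ lam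
    obtain ⟨i0, -, hi0⟩ := Finset.exists_min_image Finset.univ x ⟨⟨0, hn⟩, Finset.mem_univ _⟩
    obtain ⟨t0, -, ht0⟩ := Finset.exists_mem_eq_inf' (s := (Finset.univ : Finset (Fin k → Fin n)))
      ⟨fun _ => ⟨0, hn⟩, Finset.mem_univ _⟩
      (fun t : Fin k → Fin n => A (Fin.cons i0 t) + ∑ j, x (t j))
    have h1 := heig i0
    rw [ht0] at h1
    have h2 : Finset.univ.inf' ⟨fun _ => ⟨0, hn⟩, Finset.mem_univ _⟩ A ≤ A (Fin.cons i0 t0) :=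
      Finset.inf'_le _ (Finset.mem_univ _)
    have h3 : (k:ℝ) * x i0 ≤ ∑ j : Fin k, x (t0 j) := by
      calc (k:ℝ) * x i0 = ∑ _j : Fin k, x i0 := by simp [mul_comm]
        _ ≤ ∑ j : Fin k, x (t0 j) :=
            Finset.sum_le_sum (fun j _ => hi0 _ (Finset.mem_univ _))
    linarith
end

section
/- Let A ∈ ℝ^(n^m) be a symmetric tensor whose minimum-value entries all have the same index multiset I ⊆ [n] (i.e., every (i1,...,im) achieving min A has {i1,...,im} = I as a set). If x is a tropical H-eigenvector of A, then x_i = x_j for all i, j ∈ I, and x_i ≤ x_j for all i ∈ I and j ∉ I. -/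
/-- For a symmetric tensor whose minimum entries all have the same index set `I`,
an H-eigenvector is constant on `I` and takes its smallest values on `I`. -/
theorem stmt_7 (n k : ℕ) (hn : 0 < n) (hk : 1 ≤ k)
    (A : (Fin (k + 1) → Fin n) → ℝ)
    (hsym : ∀ (σ : Equiv.Perm (Fin (k + 1))) (u : Fin (k + 1) → Fin n), A (u ∘ σ) = A u)
    (I : Finset (Fin n))
    (hmin : ∀ u : Fin (k + 1) → Fin n,
      A u = Finset.univ.inf' ⟨fun _ => ⟨0, hn⟩, Finset.mem_univ _⟩ A →
        Finset.image u Finset.univ = I)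
    (x : Fin n → ℝ) (lam : ℝ)
    (heig : ∀ i : Fin n,
      Finset.univ.inf' ⟨fun _ => ⟨0, hn⟩, Finset.mem_univ _⟩
        (fun t : Fin k → Fin n => A (Fin.cons i t) + ∑ j, x (t j)) = lam + (k : ℝ) * x i) :
    (∀ i ∈ I, ∀ j ∈ I, x i = x j) ∧ (∀ i ∈ I, ∀ j : Fin n, j ∉ I → x i ≤ x j) := by
  set μ : ℝ := Finset.univ.inf' ⟨fun _ => ⟨0, hn⟩, Finset.mem_univ _⟩ A with hμdef
  have hne : (Finset.univ : Finset (Fin (k+1) → Fin n)).Nonempty :=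
    ⟨fun _ => ⟨0, hn⟩, Finset.mem_univ _⟩
  obtain ⟨u, -, hu⟩ := Finset.exists_mem_eq_inf' hne A
  have hAu : A u = μ := hu.symm
  have hI : Finset.image u Finset.univ = I := hmin u hAu
  have hμle : ∀ w, μ ≤ A w := fun w => Finset.inf'_le _ (Finset.mem_univ w)
  -- eigen upper bound
  have hub : ∀ (i : Fin n) (t : Fin k → Fin n),
      lam + (k : ℝ) * x i ≤ A (Fin.cons i t) + ∑ j, x (t j) := by
    intro i t
    rw [← heig i]
    exact Finset.inf'_le _ (Finset.mem_univ t)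
  -- eigen attained
  have hatt : ∀ i : Fin n, ∃ t : Fin k → Fin n,
      A (Fin.cons i t) + ∑ j, x (t j) = lam + (k : ℝ) * x i := by
    intro i
    obtain ⟨t, -, ht⟩ := Finset.exists_mem_eq_inf'
      (⟨fun _ => ⟨0, hn⟩, Finset.mem_univ _⟩ : (Finset.univ : Finset (Fin k → Fin n)).Nonempty)
      (fun t : Fin k → Fin n => A (Fin.cons i t) + ∑ j, x (t j))
    exact ⟨t, by rw [← ht, heig i]⟩
  set S : ℝ := ∑ j, x (u j) with hSdef
  -- key inequality
  have key : ∀ p : Fin (k+1), lam + ((k:ℝ)+1) * x (u p) ≤ μ + S := by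
    intro p
    set σ : Equiv.Perm (Fin (k+1)) := Equiv.swap 0 p with hσ
    have hv : A (u ∘ σ) = μ := by rw [hsym σ u, hAu]
    have h0 : (u ∘ σ) 0 = u p := by simp [hσ, Equiv.swap_apply_left]
    have h1 := hub ((u ∘ σ) 0) (Fin.tail (u ∘ σ))
    rw [Fin.cons_self_tail, hv] at h1
    have hsum : x ((u ∘ σ) 0) + ∑ j : Fin k, x (Fin.tail (u ∘ σ) j) = S := by
      have h2 : ∑ j : Fin k, x (Fin.tail (u ∘ σ) j) = ∑ j : Fin k, x ((u ∘ σ) j.succ) := rfl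
      rw [hSdef, h2, ← Fin.sum_univ_succ (fun j => x ((u ∘ σ) j))]
      exact Fintype.sum_equiv σ _ _ (fun j => rfl)
    rw [h0] at h1 hsum
    linarith
  -- lam ≤ μ
  have hk1 : (0:ℝ) < (k:ℝ) + 1 := by positivity
  have hlamle : lam ≤ μ := by
    have hs := Finset.sum_le_sum (fun p (_ : p ∈ (Finset.univ : Finset (Fin (k+1)))) => key p)
    simp only [Finset.sum_add_distrib, Finset.sum_const, Finset.card_univ, Fintype.card_fin,
      nsmul_eq_mul, ← Finset.mul_sum, ← hSdef] at hs
    push_cast at hs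
    nlinarith [hs]
  -- argmin of x
  have hxne : (Finset.univ : Finset (Fin n)).Nonempty := ⟨⟨0, hn⟩, Finset.mem_univ _⟩
  obtain ⟨i1, -, hi1⟩ := Finset.exists_mem_eq_inf' hxne x
  have hi1min : ∀ l, x i1 ≤ x l := fun l => by
    rw [← hi1]; exact Finset.inf'_le _ (Finset.mem_univ l)
  -- lam ≥ μ
  have hμlelam : μ ≤ lam := by
    obtain ⟨t, ht⟩ := hatt i1
    have h1 : μ ≤ A (Fin.cons i1 t) := hμle _
    have h2 : (k:ℝ) * x i1 ≤ ∑ j, x (t j) := by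
      calc (k:ℝ) * x i1 = ∑ _j : Fin k, x i1 := by
            rw [Finset.sum_const, Finset.card_univ, Fintype.card_fin, nsmul_eq_mul]
        _ ≤ ∑ j, x (t j) := Finset.sum_le_sum (fun j _ => hi1min (t j))
    linarith
  have hlam : lam = μ := le_antisymm hlamle hμlelam
  -- equality in key for each p
  have keyeq : ∀ p : Fin (k+1), ((k:ℝ)+1) * x (u p) = S := by
    have hsum_eq : ∑ p : Fin (k+1), (lam + ((k:ℝ)+1) * x (u p)) = ∑ p : Fin (k+1), (μ + S) := by
      simp only [Finset.sum_add_distrib, Finset.sum_const, Finset.card_univ, Fintype.card_fin,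
        nsmul_eq_mul, ← Finset.mul_sum, ← hSdef, hlam]
      push_cast
      ring
    have := (Finset.sum_eq_sum_iff_of_le (fun p (_ : p ∈ Finset.univ) => key p)).mp hsum_eq
    intro p
    have := this p (Finset.mem_univ p)
    linarith [this, hlam ▸ this]
  have hconstI : ∀ i ∈ I, x i = x (u 0) := by
    intro i hi
    rw [← hI] at hi
    obtain ⟨p, -, rfl⟩ := Finset.mem_image.mp hi
    have h1 := keyeq p
    have h2 := keyeq 0
    have := hk1.ne'
    nlinarith
  -- strict inequality off I
  have hstrict : ∀ j : Fin n, j ∉ I → x i1 < x j := by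
    intro j hj
    obtain ⟨t, ht⟩ := hatt j
    have hAw : μ < A (Fin.cons j t) := by
      rcases lt_or_eq_of_le (hμle (Fin.cons j t)) with h | h
      · exact h
      · exfalso
        apply hj
        rw [← hmin (Fin.cons j t) h.symm]
        exact Finset.mem_image.mpr ⟨0, Finset.mem_univ _, rfl⟩
    have h2 : (k:ℝ) * x i1 ≤ ∑ j', x (t j') := by
      calc (k:ℝ) * x i1 = ∑ _j : Fin k, x i1 := by
            rw [Finset.sum_const, Finset.card_univ, Fintype.card_fin, nsmul_eq_mul]
        _ ≤ ∑ j', x (t j') := Finset.sum_le_sum (fun j' _ => hi1min (t j'))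
    have hkpos : (0:ℝ) < (k:ℝ) := by exact_mod_cast hk
    nlinarith [ht, hlam]
  have hi1I : i1 ∈ I := by
    by_contra h
    exact absurd (hstrict i1 h) (lt_irrefl _)
  refine ⟨fun i hi j hj => by rw [hconstI i hi, hconstI j hj], fun i hi j hj => ?_⟩
  rw [hconstI i hi, ← hconstI i1 hi1I]
  exact (hstrict j hj).le
end

section
/- For n ≥ 1 and m ≥ 2, let s_j denote the residue of j in [n] (i.e., s_j = j − n·⌊(j−1)/n⌋). The point y ∈ ℝ^(n^m) with y = 1/n at each position (s_j, s_{j+1}, ..., s_{j+m-1}) for j = 1, ..., n, and 0 elsewhere, lies in the H-cycle polytope H_{n,m}. -/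
/-- `sres n hn j` is the residue of `j` modulo `n`, as an element of `Fin n`. -/
def sres (n : ℕ) (hn : 0 < n) (j : ℕ) : Fin n := ⟨j % n, Nat.mod_lt j hn⟩

/-!
Every coordinate `i` of `[n]` occurs exactly once in each position `l` of the `n` windows
`(s_j, …, s_{j+m-1})`, since `j ↦ s_{j+l}` is a bijection onto `[n]`. Summing the windows' vectors
`(m-1) e_{u_0} - ∑_{l ≠ 0} e_{u_l}` therefore gives `(m-1) 𝟙 - (m-1) 𝟙 = 0`, while the weights
`1/n` on the `n` distinct windows add up to `1`.
-/

open Finset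

section

variable {n : ℕ} (hn : 0 < n)

open Fin.NatCast in
theorem sres_eq_natCast [NeZero n] (k : ℕ) : sres n hn k = (k : Fin n) := by
  ext
  simp [sres, Fin.val_natCast]

open Fin.NatCast in
theorem sum_range_sres_add {M : Type*} [AddCommMonoid M] (f : Fin n → M) (c : ℕ) :
    ∑ j ∈ range n, f (sres n hn (j + c)) = ∑ i, f i := by
  have : NeZero n := ⟨hn.ne'⟩
  calc ∑ j ∈ range n, f (sres n hn (j + c))
      = ∑ j ∈ range n, f ((j : Fin n) + c) :=
        sum_congr rfl fun j _ => by rw [sres_eq_natCast, Nat.cast_add]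
    _ = ∑ i : Fin n, f (i + c) := by
        rw [← Fin.sum_univ_eq_sum_range (fun j => f ((j : Fin n) + c))]
        simp only [Fin.cast_val_eq_self]
    _ = ∑ i, f i := Equiv.sum_comp (Equiv.addRight (c : Fin n)) f

theorem sum_range_single_sres_add (c : ℕ) :
    ∑ j ∈ range n, (Pi.single (sres n hn (j + c)) (1 : ℝ) : Fin n → ℝ) = 1 := by
  rw [sum_range_sres_add hn (fun i => (Pi.single i (1 : ℝ) : Fin n → ℝ))]
  exact univ_sum_single 1

variable (m : ℕ)

def window (j : ℕ) : Fin m → Fin n := fun l => sres n hn (j + l)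

theorem window_injOn (hm : 0 < m) : Set.InjOn (window hn m) (range n) := by
  intro j hj k hk hjk
  simp only [coe_range, Set.mem_Iio] at hj hk
  have := congrArg Fin.val (congrFun hjk ⟨0, hm⟩)
  simpa [window, sres, Nat.mod_eq_of_lt hj, Nat.mod_eq_of_lt hk] using this

theorem sum_range_window_balance (hm : 0 < m) :
    ∑ j ∈ range n, (((m - 1 : ℕ) : ℝ) • (Pi.single (window hn m j ⟨0, hm⟩) (1 : ℝ) : Fin n → ℝ) -
      ∑ l ∈ univ.erase (⟨0, hm⟩ : Fin m), (Pi.single (window hn m j l) (1 : ℝ) : Fin n → ℝ)) =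
      0 := by
  simp only [window]
  rw [sum_sub_distrib, ← smul_sum, sum_comm, sum_range_single_sres_add]
  simp only [sum_range_single_sres_add, sum_const, card_erase_of_mem (mem_univ _), card_univ,
    Fintype.card_fin, Nat.cast_smul_eq_nsmul, sub_self]

end

theorem sum_ite_mem_image_smul {ι κ R M : Type*} [Fintype κ] [DecidableEq κ] [Semiring R]
    [AddCommMonoid M] [Module R M] (s : Finset ι) (g : ι → κ) (hg : Set.InjOn g s) (a : R)
    (F : κ → M) :
    ∑ u, (if u ∈ s.image g then a else 0) • F u = a • ∑ i ∈ s, F (g i) := by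
  simp only [ite_smul, zero_smul]
  rw [sum_ite_mem, univ_inter, ← smul_sum, sum_image hg]

open Classical in
/-- The point with mass 1/n on each of the n cyclically shifted windows
`(s_j, s_{j+1}, …, s_{j+m-1})`, `j = 0,…,n-1`, lies in the H-cycle polytope H_{n,m}.
A point of ℝ^{n^m} is a function on m-tuples `u : Fin m → Fin n`. -/
theorem stmt_10 (n m : ℕ) (hn : 0 < n) (hm : 2 ≤ m)
    (y : (Fin m → Fin n) → ℝ)
    (hy : ∀ u : Fin m → Fin n,
      y u = if ∃ j < n, u = fun l : Fin m => sres n hn (j + (l : ℕ)) then (1 : ℝ) / n else 0) :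
    (∀ u, 0 ≤ y u) ∧
    (∑ u : Fin m → Fin n, y u) = 1 ∧
    (∑ u : Fin m → Fin n, y u •
        (((m - 1 : ℕ) : ℝ) • (Pi.single (u ⟨0, by omega⟩) (1 : ℝ) : Fin n → ℝ) -
          ∑ l ∈ Finset.univ.erase (⟨0, by omega⟩ : Fin m),
            (Pi.single (u l) (1 : ℝ) : Fin n → ℝ))) = (0 : Fin n → ℝ) := by
  have hy' : y = fun u => if u ∈ (range n).image (window hn m) then (1 : ℝ) / n else 0 := by
    funext u
    simp only [hy, mem_image, mem_range, eq_comm]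
    rfl
  have hsum {M : Type} [AddCommMonoid M] [Module ℝ M] (F : (Fin m → Fin n) → M) :
      ∑ u, y u • F u = (1 / n : ℝ) • ∑ j ∈ range n, F (window hn m j) := by
    rw [hy']
    exact sum_ite_mem_image_smul _ _ (window_injOn hn m (by omega)) _ F
  refine ⟨fun u => by rw [hy u]; split_ifs <;> positivity, ?_, ?_⟩
  · simpa [hn.ne'] using hsum (fun _ => (1 : ℝ))
  · rw [hsum, sum_range_window_balance hn m (by omega), smul_zero]
end

section
/- Every vertex y of the H-cycle polytope H_{n,m} has at most one nonzero coordinate of the form y_{j i2 ... im} for each fixed first index j ∈ [n]; in particular, every vertex has at most n nonzero coordinates. -/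
open Classical in
/-- Every vertex (extreme point) of the H-cycle polytope H_{n,m} has at most one
nonzero coordinate for each fixed first index `j`; in particular at most `n`
nonzero coordinates.  A tensor index is split as a first index `j : Fin n`
together with the remaining `k = m - 1 ≥ 1` indices `t : Fin k → Fin n`. -/
theorem stmt_11 (n k : ℕ) (hn : 0 < n) (hk : 1 ≤ k)
    (y : Fin n → (Fin k → Fin n) → ℝ)
    (hy : y ∈ Set.extremePoints ℝ
      {z : Fin n → (Fin k → Fin n) → ℝ |
        (∀ i t, 0 ≤ z i t) ∧
        (∑ i : Fin n, ∑ t : Fin k → Fin n, z i t) = 1 ∧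
        (∑ i : Fin n, ∑ t : Fin k → Fin n, z i t •
            ((k : ℝ) • (Pi.single i (1 : ℝ) : Fin n → ℝ) -
              ∑ j, (Pi.single (t j) (1 : ℝ) : Fin n → ℝ))) = (0 : Fin n → ℝ)}) :
    (∀ j : Fin n, ∀ t t' : Fin k → Fin n, y j t ≠ 0 → y j t' ≠ 0 → t = t') ∧
    (Finset.univ.filter
      (fun p : Fin n × (Fin k → Fin n) => y p.1 p.2 ≠ 0)).card ≤ n := by
  classical
  rw [mem_extremePoints] at hy
  obtain ⟨⟨hpos, hsum, hbal⟩, hext⟩ := hy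
  set v : Fin n × (Fin k → Fin n) → Fin n → ℝ :=
    fun p => (k : ℝ) • (Pi.single p.1 1 : Fin n → ℝ)
      - ∑ j, (Pi.single (p.2 j) 1 : Fin n → ℝ) with hv
  set S : Finset (Fin n × (Fin k → Fin n)) :=
    Finset.univ.filter (fun p => y p.1 p.2 ≠ 0) with hSdef
  have hySpos : ∀ p ∈ S, 0 < y p.1 p.2 := fun p hp =>
    lt_of_le_of_ne (hpos _ _) (Ne.symm (Finset.mem_filter.mp hp).2)
  have hmemS : ∀ p : Fin n × (Fin k → Fin n), p ∈ S ↔ y p.1 p.2 ≠ 0 := by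
    intro p; simp [hSdef]
  -- value of v at a coordinate
  have hva : ∀ p a, v p a = (k : ℝ) * (if a = p.1 then 1 else 0)
      - ∑ j, (if a = p.2 j then 1 else 0) := by
    intro p a
    simp [hv, Pi.single_apply]
  -- coordinates of v sum to zero
  have hvsum : ∀ p, ∑ a, v p a = 0 := by
    intro p
    simp only [hva]
    rw [Finset.sum_sub_distrib]
    rw [← Finset.mul_sum]
    rw [Finset.sum_comm]
    simp [Finset.sum_ite_eq]
  -- scalar balance
  have hbal' : ∑ p : Fin n × (Fin k → Fin n), y p.1 p.2 • v p = 0 := by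
    rw [Fintype.sum_prod_type]; exact hbal
  have hbalA : ∀ a, ∑ p : Fin n × (Fin k → Fin n), y p.1 p.2 * v p a = 0 := by
    intro a
    have := congrFun hbal' a
    simpa [Finset.sum_apply] using this
  -- if no element of S has head a, then v p a = 0 for all p in S
  have htail : ∀ a : Fin n, (∀ p ∈ S, p.1 ≠ a) → ∀ p ∈ S, v p a = 0 := by
    intro a ha
    have hterm : ∀ p : Fin n × (Fin k → Fin n), y p.1 p.2 * v p a ≤ 0 := by
      intro p
      by_cases hp : p ∈ S
      · have h1 : v p a ≤ 0 := by
          rw [hva, if_neg (fun h => ha p hp h.symm)]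
          have : (0:ℝ) ≤ ∑ j, (if a = p.2 j then (1:ℝ) else 0) :=
            Finset.sum_nonneg fun j _ => by positivity
          linarith
        exact mul_nonpos_iff.mpr (Or.inl ⟨le_of_lt (hySpos p hp), h1⟩)
      · have : y p.1 p.2 = 0 := by_contra fun h => hp ((hmemS p).mpr h)
        simp [this]
    have hzero := (Finset.sum_eq_zero_iff_of_nonpos (fun p _ => hterm p)).mp (hbalA a)
    intro p hp
    have := hzero p (Finset.mem_univ p)
    exact (mul_eq_zero.mp this).resolve_left (hySpos p hp).ne'
  have hvanish : ∀ p ∈ S, ∀ a, a ∉ S.image Prod.fst → v p a = 0 := by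
    intro p hp a ha
    exact htail a (fun q hq h => ha (Finset.mem_image.mpr ⟨q, hq, h⟩)) p hp
  -- any direction supported on S satisfying both linear constraints is zero
  have hindep : ∀ d : Fin n × (Fin k → Fin n) → ℝ,
      (∀ p, p ∉ S → d p = 0) → (∑ p, d p) = 0 →
      (∀ a, ∑ p : Fin n × (Fin k → Fin n), d p * v p a = 0) → d = 0 := by
    intro d hd0 hdsum hdbal
    by_contra hdne
    have hSne : S.Nonempty := by
      by_contra h
      exact hdne (funext fun p => hd0 p (fun hp => h ⟨p, hp⟩))
    set ε : ℝ := S.inf' hSne (fun p => y p.1 p.2 / (|d p| + 1)) with hε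
    have hεpos : 0 < ε := by
      rw [hε, Finset.lt_inf'_iff]
      intro p hp
      exact div_pos (hySpos p hp) (by positivity)
    have hboundall : ∀ p : Fin n × (Fin k → Fin n), ε * |d p| ≤ y p.1 p.2 := by
      intro p
      by_cases hp : p ∈ S
      · have h1 : ε ≤ y p.1 p.2 / (|d p| + 1) := Finset.inf'_le _ hp
        have h2 : ε * (|d p| + 1) ≤ y p.1 p.2 := by
          rw [← le_div_iff₀ (by positivity)]; exact h1
        nlinarith [abs_nonneg (d p), hεpos]
      · have : d p = 0 := hd0 p hp
        simpa [this] using hpos p.1 p.2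
    have hdsum2 : ∑ i, ∑ t, d (i, t) = 0 := (Fintype.sum_prod_type (f := d)).symm.trans hdsum
    have hdbal2 : ∀ a, ∑ i, ∑ t, d (i, t) * v (i, t) a = 0 := fun a =>
      (Fintype.sum_prod_type (f := fun p => d p * v p a)).symm.trans (hdbal a)
    have hbalA2 : ∀ a, ∑ i, ∑ t, y i t * v (i, t) a = 0 := fun a =>
      (Fintype.sum_prod_type (f := fun p => y p.1 p.2 * v p a)).symm.trans (hbalA a)
    have hsum2 : ∑ i, ∑ t, y i t = 1 := hsum
    -- membership of perturbed points
    have hmemz : ∀ s : ℝ, |s| ≤ 1 →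
        (fun i t => y i t + (s * ε) * d (i, t)) ∈
        {z : Fin n → (Fin k → Fin n) → ℝ |
          (∀ i t, 0 ≤ z i t) ∧
          (∑ i : Fin n, ∑ t : Fin k → Fin n, z i t) = 1 ∧
          (∑ i : Fin n, ∑ t : Fin k → Fin n, z i t •
              ((k : ℝ) • (Pi.single i (1 : ℝ) : Fin n → ℝ) -
                ∑ j, (Pi.single (t j) (1 : ℝ) : Fin n → ℝ))) = (0 : Fin n → ℝ)} := by
      intro s hs
      refine ⟨?_, ?_, ?_⟩
      · intro i t
        have h1 := hboundall (i, t)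
        have h2 : |(s * ε) * d (i, t)| ≤ ε * |d (i, t)| := by
          rw [abs_mul, abs_mul, abs_of_pos hεpos]
          have h3 := abs_nonneg (d (i, t))
          nlinarith [mul_nonneg (by linarith [hs] : (0:ℝ) ≤ 1 - |s|)
            (mul_nonneg hεpos.le h3)]
        have := neg_abs_le ((s * ε) * d (i, t))
        dsimp only
        linarith
      · have e1 : ∀ i, ∑ t, (y i t + (s * ε) * d (i, t))
            = (∑ t, y i t) + (s * ε) * ∑ t, d (i, t) := by
          intro i; rw [Finset.sum_add_distrib, Finset.mul_sum]
        simp only [e1]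
        rw [Finset.sum_add_distrib, hsum2, ← Finset.mul_sum, hdsum2, mul_zero, add_zero]
      · funext a
        have e0 : (∑ i : Fin n, ∑ t : Fin k → Fin n, (y i t + (s * ε) * d (i, t)) •
              ((k : ℝ) • (Pi.single i (1 : ℝ) : Fin n → ℝ) -
                ∑ j, (Pi.single (t j) (1 : ℝ) : Fin n → ℝ))) a
            = ∑ i, ∑ t, (y i t + (s * ε) * d (i, t)) * v (i, t) a := by
          simp [Finset.sum_apply, hv]
        rw [e0]
        have e1 : ∀ i, ∑ t, (y i t + (s * ε) * d (i, t)) * v (i, t) a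
            = (∑ t, y i t * v (i, t) a) + (s * ε) * ∑ t, d (i, t) * v (i, t) a := by
          intro i
          rw [Finset.mul_sum, ← Finset.sum_add_distrib]
          exact Finset.sum_congr rfl fun t _ => by ring
        simp only [e1]
        rw [Finset.sum_add_distrib, hbalA2 a, ← Finset.mul_sum, hdbal2 a, mul_zero,
          add_zero, Pi.zero_apply]
    have hz1 := hmemz (-1) (by norm_num)
    have hz2 := hmemz 1 (by norm_num)
    have hseg : y ∈ openSegment ℝ (fun i t => y i t + ((-1) * ε) * d (i, t))
        (fun i t => y i t + (1 * ε) * d (i, t)) := by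
      refine ⟨1/2, 1/2, by norm_num, by norm_num, by norm_num, ?_⟩
      funext i t
      simp only [Pi.add_apply, Pi.smul_apply, smul_eq_mul]
      ring
    obtain ⟨h1, h2⟩ := hext _ hz1 _ hz2 hseg
    apply hdne
    funext p
    have := congrFun (congrFun h2 p.1) p.2
    simp only [one_mul] at this
    have hεd : ε * d (p.1, p.2) = 0 := by linarith
    have := (mul_eq_zero.mp hεd).resolve_left hεpos.ne'
    simpa using this
  -- first projection is injective on S
  have hinj : Set.InjOn Prod.fst (S : Set (Fin n × (Fin k → Fin n))) := by
    by_contra hninj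
    have hcard : (S.image Prod.fst).card < S.card :=
      lt_of_le_of_ne Finset.card_image_le
        (fun h => hninj (Finset.injOn_of_card_image_eq h))
    set H : Finset (Fin n) := S.image Prod.fst with hH
    have hSne : S.Nonempty := Finset.card_pos.mp (Nat.lt_of_le_of_lt (Nat.zero_le _) hcard)
    have hHne : H.Nonempty := hSne.image _
    let T : (↥S → ℝ) →ₗ[ℝ] (↥H → ℝ) :=
      { toFun := fun d a => (∑ p : ↥S, d p * v ↑p ↑a) + ∑ p : ↥S, d p
        map_add' := by
          intro d e; funext a
          simp only [Pi.add_apply, add_mul, Finset.sum_add_distrib]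
          ring
        map_smul' := by
          intro c d; funext a
          simp only [Pi.smul_apply, smul_eq_mul, RingHom.id_apply, Finset.mul_sum,
            mul_add, mul_assoc] }
    have hTapp : ∀ (d : ↥S → ℝ) (a : ↥H),
        T d a = (∑ p : ↥S, d p * v ↑p ↑a) + ∑ p : ↥S, d p := fun d a => rfl
    have hTnotinj : ¬ Function.Injective T := by
      intro hinjT
      have hle := LinearMap.finrank_le_finrank_of_injective hinjT
      rw [Module.finrank_pi, Module.finrank_pi, Fintype.card_coe, Fintype.card_coe] at hle
      omega
    obtain ⟨d₁, d₂, hTeq, hne12⟩ := Function.not_injective_iff.mp hTnotinj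
    set e : ↥S → ℝ := d₁ - d₂ with he
    have heT : T e = 0 := by rw [he, map_sub, hTeq, sub_self]
    have hene : e ≠ 0 := sub_ne_zero.mpr hne12
    have hTa : ∀ a : ↥H, (∑ p : ↥S, e p * v ↑p ↑a) + ∑ p : ↥S, e p = 0 := by
      intro a
      have h := congrFun heT a
      rw [hTapp] at h
      simpa using h
    have hvH : ∀ p : ↥S, ∑ a : ↥H, v ↑p ↑a = 0 := by
      intro p
      rw [Finset.sum_coe_sort H (fun a => v ↑p a)]
      rw [Finset.sum_subset (Finset.subset_univ H) (fun a _ ha => hvanish ↑p p.2 a ha)]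
      exact hvsum ↑p
    have hesum : ∑ p : ↥S, e p = 0 := by
      have hsumH : ∑ a : ↥H, ((∑ p : ↥S, e p * v ↑p ↑a) + ∑ p : ↥S, e p) = 0 :=
        Finset.sum_eq_zero fun a _ => hTa a
      rw [Finset.sum_add_distrib, Finset.sum_comm] at hsumH
      have h1 : ∑ p : ↥S, ∑ a : ↥H, e p * v ↑p ↑a = 0 := by
        refine Finset.sum_eq_zero fun p _ => ?_
        rw [← Finset.mul_sum, hvH p, mul_zero]
      rw [h1, zero_add, Finset.sum_const, Finset.card_univ, Fintype.card_coe,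
        nsmul_eq_mul] at hsumH
      have hHcard : (0:ℝ) < (H.card : ℝ) := by
        exact_mod_cast Finset.card_pos.mpr hHne
      exact (mul_eq_zero.mp hsumH).resolve_left hHcard.ne'
    have hfull : ∀ a : Fin n, ∑ p : ↥S, e p * v ↑p a = 0 := by
      intro a
      by_cases ha : a ∈ H
      · have h := hTa ⟨a, ha⟩
        rw [hesum, add_zero] at h
        exact h
      · exact Finset.sum_eq_zero fun p _ => by rw [hvanish ↑p p.2 a ha, mul_zero]
    set D : Fin n × (Fin k → Fin n) → ℝ :=
      fun p => if h : p ∈ S then e ⟨p, h⟩ else 0 with hD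
    have hD0 : ∀ p, p ∉ S → D p = 0 := fun p hp => dif_neg hp
    have hDS : ∀ p : ↥S, D ↑p = e p := fun p => dif_pos p.2
    have hDsum : ∑ p, D p = 0 := by
      rw [← Finset.sum_subset (Finset.subset_univ S) (fun p _ hp => hD0 p hp)]
      rw [← Finset.sum_coe_sort S D, ← hesum]
      exact Finset.sum_congr rfl fun p _ => hDS p
    have hDbal : ∀ a, ∑ p : Fin n × (Fin k → Fin n), D p * v p a = 0 := by
      intro a
      rw [← Finset.sum_subset (Finset.subset_univ S)
        (fun p _ hp => by rw [hD0 p hp, zero_mul])]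
      rw [← Finset.sum_coe_sort S (fun p => D p * v p a), ← hfull a]
      exact Finset.sum_congr rfl fun p _ => by rw [hDS p]
    have hDzero := hindep D hD0 hDsum hDbal
    apply hene
    funext p
    have h := congrFun hDzero ↑p
    rw [hDS p] at h
    simpa using h
  constructor
  · intro j t t' ht ht'
    have h1 : (j, t) ∈ S := (hmemS _).mpr ht
    have h2 : (j, t') ∈ S := (hmemS _).mpr ht'
    have := hinj h1 h2 rfl
    exact congrArg Prod.snd this
  · calc S.card = (S.image Prod.fst).card := (Finset.card_image_of_injOn hinj).symm
      _ ≤ Fintype.card (Fin n) := Finset.card_le_univ _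
      _ = n := Fintype.card_fin n
end

section
/- Let n ≥ 2, m ≥ 2 and write m = a·n + r with 1 ≤ r ≤ n. Define f(x) = a − (m−1) + x + x^2 + ... + x^{r−1} + a·(x + x^2 + ... + x^{n−1}). Then f(1) = 0, and for every n-th root of unity ξ ≠ 1 in ℂ, f(ξ) ≠ 0. -/
/-!
Rewritten with geometric sums, `f x = (1 + ⋯ + x^{r-1}) + a (1 + ⋯ + x^{n-1}) - m`.
At an n-th root of unity `ξ ≠ 1` the second sum vanishes, and the first cannot equal `m`:
for `r ≤ 1` it has norm at most `1 < m`, and for `r ≥ 2` strict convexity of the plane gives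
`‖1 + ξ‖ < 2`, hence norm `< r ≤ m`.
-/

open Finset

lemma geom_sum_eq_one_add_sum_Icc {R : Type*} [Semiring R] (x : R) {k : ℕ} (hk : 1 ≤ k) :
    ∑ i ∈ range k, x ^ i = 1 + ∑ i ∈ Icc 1 (k - 1), x ^ i := by
  obtain ⟨j, rfl⟩ := Nat.exists_eq_add_of_le' hk
  rw [sum_range_succ', add_comm, pow_zero, Nat.add_sub_cancel, ← Ico_add_one_right_eq_Icc,
    sum_Ico_eq_sum_range, Nat.add_sub_cancel]
  simp only [add_comm 1]

lemma geom_sum_eq_zero_of_pow_eq_one {K : Type*} [DivisionRing K] {ξ : K} {n : ℕ}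
    (hξn : ξ ^ n = 1) (hξ1 : ξ ≠ 1) : ∑ i ∈ range n, ξ ^ i = 0 := by
  rw [geom_sum_eq hξ1, hξn, sub_self, zero_div]

lemma norm_add_lt_two_of_ne {E : Type*} [NormedAddCommGroup E] [NormedSpace ℝ E]
    [StrictConvexSpace ℝ E] {x y : E} (hx : ‖x‖ ≤ 1) (hy : ‖y‖ ≤ 1) (hne : x ≠ y) :
    ‖x + y‖ < 2 := by
  have := norm_combo_lt_of_ne hx hy hne (a := 1 / 2) (b := 1 / 2) (by norm_num) (by norm_num)
    (by norm_num)
  rw [← smul_add, norm_smul] at this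
  norm_num at this
  linarith

namespace Complex

lemma norm_geom_sum_lt {ξ : ℂ} (hξ : ‖ξ‖ ≤ 1) (hξ1 : ξ ≠ 1) {r : ℕ} (hr : 2 ≤ r) :
    ‖∑ i ∈ range r, ξ ^ i‖ < r := by
  induction r, hr using Nat.le_induction with
  | base =>
    simpa [sum_range_succ] using norm_add_lt_two_of_ne norm_one.le hξ hξ1.symm
  | succ r _ ih =>
    calc ‖∑ i ∈ range (r + 1), ξ ^ i‖
        ≤ ‖∑ i ∈ range r, ξ ^ i‖ + ‖ξ‖ ^ r := by
          rw [sum_range_succ, ← norm_pow]; exact norm_add_le _ _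
      _ < r + 1 := add_lt_add_of_lt_of_le ih (pow_le_one₀ (norm_nonneg ξ) hξ)
      _ = (r + 1 : ℕ) := by push_cast; rfl

lemma geom_sum_ne_natCast {ξ : ℂ} (hξ : ‖ξ‖ ≤ 1) (hξ1 : ξ ≠ 1) {r m : ℕ} (hrm : r ≤ m)
    (hm : 2 ≤ m) : ∑ i ∈ range r, ξ ^ i ≠ m := by
  intro h
  have hlt : ‖∑ i ∈ range r, ξ ^ i‖ < m := by
    rcases lt_or_ge r 2 with hr | hr
    · have hm' : (2 : ℝ) ≤ m := by exact_mod_cast hm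
      interval_cases r <;> norm_num <;> linarith
    · exact (norm_geom_sum_lt hξ hξ1 hr).trans_le (by exact_mod_cast hrm)
  rw [h, norm_natCast] at hlt
  exact hlt.false

end Complex

theorem stmt_12_general (n m a r : ℕ) (hm : 2 ≤ m)
    (hmar : m = a * n + r) (hr1 : 1 ≤ r) (hr2 : r ≤ n)
    (f : ℂ → ℂ)
    (hf : ∀ x : ℂ, f x = (a : ℂ) - ((m : ℂ) - 1) +
      (∑ i ∈ Finset.Icc 1 (r - 1), x ^ i) + (a : ℂ) * ∑ i ∈ Finset.Icc 1 (n - 1), x ^ i) :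
    f 1 = 0 ∧ ∀ ξ : ℂ, ξ ^ n = 1 → ξ ≠ 1 → f ξ ≠ 0 := by
  have hn : 1 ≤ n := hr1.trans hr2
  have hf_geom : ∀ x : ℂ, f x = ∑ i ∈ range r, x ^ i + a * ∑ i ∈ range n, x ^ i - m := by
    intro x
    rw [hf, geom_sum_eq_one_add_sum_Icc x hr1, geom_sum_eq_one_add_sum_Icc x hn]
    ring
  refine ⟨by simp [hf_geom, hmar, add_comm], fun ξ hξn hξ1 => ?_⟩
  rw [hf_geom, geom_sum_eq_zero_of_pow_eq_one hξn hξ1, mul_zero, add_zero, sub_ne_zero]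
  exact Complex.geom_sum_ne_natCast (Complex.norm_eq_one_of_pow_eq_one hξn (by omega)).le hξ1
    (by omega) hm

/-- With `m = a·n + r`, `1 ≤ r ≤ n`, the polynomial
`f(x) = a − (m−1) + x + ⋯ + x^{r−1} + a(x + ⋯ + x^{n−1})`
vanishes at `x = 1` but at no other n-th root of unity. -/
theorem stmt_12 (n m a r : ℕ) (hn : 2 ≤ n) (hm : 2 ≤ m)
    (hmar : m = a * n + r) (hr1 : 1 ≤ r) (hr2 : r ≤ n)
    (f : ℂ → ℂ)
    (hf : ∀ x : ℂ, f x = (a : ℂ) - ((m : ℂ) - 1) +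
      (∑ i ∈ Finset.Icc 1 (r - 1), x ^ i) + (a : ℂ) * ∑ i ∈ Finset.Icc 1 (n - 1), x ^ i) :
    f 1 = 0 ∧ ∀ ξ : ℂ, ξ ^ n = 1 → ξ ≠ 1 → f ξ ≠ 0 :=
  stmt_12_general n m a r hm hmar hr1 hr2 f hf
end

section
/- Let n ≥ 2, m ≥ 2, and let W be the n × n circulant matrix whose j-th column is (m−1)·e_{s_j} − e_{s_{j+1}} − ... − e_{s_{j+m−1}}, where s_k is the residue of k in [n]. Then W has rank n − 1. -/
/-!
`W` is the Laplacian `(m - 1) • 1 - ∑ shifts` of the directed Cayley multigraph of `ℤ/n` with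
steps `1, …, m - 1`. A vector in its kernel satisfies the mean-value property
`(m - 1) v x = ∑ₗ v (x - l)`, so at a maximum of `v` all the `v (x - l)` are maximal too; since the
step `1` generates `ℤ/n`, the maximum spreads to every point. Hence the kernel is the line of
constants and rank–nullity gives rank `n - 1`.
-/

open Finset Matrix

section MaximumPrinciple

variable {G ι K : Type*} [AddGroup G] [Finite G] [Field K] [LinearOrder K] [IsStrictOrderedRing K]

theorem eq_of_forall_card_mul_eq_sum_sub {I : Finset ι} {a : ι → G}
    (hgen : AddSubgroup.closure (a '' I) = ⊤) {v : G → K}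
    (hv : ∀ x, #I * v x = ∑ l ∈ I, v (x - a l)) (x y : G) : v x = v y := by
  obtain ⟨x₀, hmax⟩ := Finite.exists_max v
  have hstep : ∀ x, v x = v x₀ → ∀ l ∈ I, v (x - a l) = v x₀ := by
    intro x hx
    refine (sum_eq_sum_iff_of_le fun l _ => hmax (x - a l)).mp ?_
    rw [← hv, hx, sum_const, nsmul_eq_mul]
  have hclosure : ∀ t ∈ AddSubmonoid.closure (a '' I), ∀ x, v x = v x₀ → v (x - t) = v x₀ := by
    intro t ht
    induction ht using AddSubmonoid.closure_induction with
    | mem t ht =>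
      obtain ⟨l, hl, rfl⟩ := ht
      exact fun x hx => hstep x hx l hl
    | zero => simp
    | add t s _ _ iht ihs =>
      intro x hx
      simpa [sub_add_eq_sub_sub_swap] using iht _ (ihs x hx)
  have hmem : ∀ t, t ∈ AddSubmonoid.closure (a '' I) := by
    intro t
    rw [← AddSubgroup.closure_toAddSubmonoid_of_finite, hgen]
    trivial
  have hconst : ∀ y, v y = v x₀ := fun y => by
    simpa using hclosure (-y + x₀) (hmem _) x₀ rfl
  rw [hconst x, hconst y]

end MaximumPrinciple

section CayleyLaplacian

variable {G ι K : Type*} [AddCommGroup G] [Fintype G] [DecidableEq G]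

def cayleyLaplacian [Ring K] (I : Finset ι) (a : ι → G) : Matrix G G K :=
  (#I : K) • 1 - ∑ l ∈ I, circulant (Pi.single (a l) 1)

theorem circulant_single_one_mulVec [NonAssocSemiring K] (g : G) (v : G → K) (x : G) :
    (circulant (Pi.single g 1) *ᵥ v) x = v (x - g) := by
  have hshift : ∀ y, x - y = g ↔ y = x - g := fun y => by
    rw [sub_eq_iff_eq_add, eq_sub_iff_add_eq', eq_comm]
  simp [mulVec, dotProduct, circulant_apply, Pi.single_apply, hshift]

theorem cayleyLaplacian_mulVec [Ring K] (I : Finset ι) (a : ι → G) (v : G → K) (x : G) :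
    (cayleyLaplacian I a *ᵥ v) x = #I * v x - ∑ l ∈ I, v (x - a l) := by
  simp [cayleyLaplacian, sub_mulVec, smul_mulVec, sum_mulVec, circulant_single_one_mulVec]

variable [Field K] [LinearOrder K] [IsStrictOrderedRing K] {I : Finset ι} {a : ι → G}

theorem ker_cayleyLaplacian (hgen : AddSubgroup.closure (a '' I) = ⊤) :
    LinearMap.ker (cayleyLaplacian I a : Matrix G G K).mulVecLin = K ∙ 1 := by
  ext v
  simp only [LinearMap.mem_ker, mulVecLin_apply, Submodule.mem_span_singleton]
  constructor
  · intro hv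
    have hmean : ∀ x, #I * v x = ∑ l ∈ I, v (x - a l) := fun x => by
      simpa [cayleyLaplacian_mulVec, sub_eq_zero] using congrFun hv x
    exact ⟨v 0, funext fun x => by simp [eq_of_forall_card_mul_eq_sum_sub hgen hmean 0 x]⟩
  · rintro ⟨c, rfl⟩
    funext x
    simp [cayleyLaplacian_mulVec]

theorem rank_cayleyLaplacian (hgen : AddSubgroup.closure (a '' I) = ⊤) :
    (cayleyLaplacian I a : Matrix G G K).rank = Fintype.card G - 1 := by
  have h := LinearMap.finrank_range_add_finrank_ker (cayleyLaplacian I a : Matrix G G K).mulVecLin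
  rw [ker_cayleyLaplacian hgen, finrank_span_singleton one_ne_zero,
    Module.finrank_fintype_fun_eq_card] at h
  rw [rank]
  omega

end CayleyLaplacian

theorem sres_add {n : ℕ} (hn : 0 < n) (k l : ℕ) : sres n hn (k + l) = sres n hn k + sres n hn l :=
  Fin.ext (by simp [sres, Fin.val_add, Nat.add_mod])

theorem sres_val {n : ℕ} (hn : 0 < n) (j : Fin n) : sres n hn j = j :=
  Fin.ext (Nat.mod_eq_of_lt j.isLt)

theorem sres_one {n : ℕ} [NeZero n] (hn : 0 < n) : sres n hn 1 = 1 :=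
  Fin.ext (Fin.val_one' n).symm

open Fin.NatCast Fin.CommRing in
theorem Fin.addSubgroup_closure_eq_top_of_one_mem {n : ℕ} [NeZero n] {s : Set (Fin n)}
    (hs : 1 ∈ s) : AddSubgroup.closure s = ⊤ := by
  refine (AddSubgroup.eq_top_iff' _).mpr fun x => ?_
  simpa [nsmul_eq_mul, Fin.cast_val_eq_self] using
    nsmul_mem (AddSubgroup.subset_closure hs) (x : ℕ)

theorem stmt_13_general (n m : ℕ) (hm : 2 ≤ m)
    (hn' : 0 < n)
    (W : Matrix (Fin n) (Fin n) ℝ)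
    (hW : ∀ j : Fin n, (fun i => W i j) =
      ((m - 1 : ℕ) : ℝ) • (Pi.single (sres n hn' (j : ℕ)) (1 : ℝ) : Fin n → ℝ) -
        ∑ l ∈ Finset.Icc 1 (m - 1),
          (Pi.single (sres n hn' ((j : ℕ) + l)) (1 : ℝ) : Fin n → ℝ)) :
    W.rank = n - 1 := by
  have : NeZero n := ⟨hn'.ne'⟩
  have hW_eq : W = cayleyLaplacian (Icc 1 (m - 1)) (sres n hn') := by
    ext i j
    have hshift : ∀ g : Fin n, i = j + g ↔ i - j = g := fun _ => sub_eq_iff_eq_add'.symm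
    simpa [cayleyLaplacian, circulant_apply, Matrix.sum_apply, sres_add, sres_val, Pi.single_apply,
      one_apply, hshift] using congrFun (hW j) i
  have hgen : AddSubgroup.closure (sres n hn' '' Icc 1 (m - 1)) = ⊤ :=
    Fin.addSubgroup_closure_eq_top_of_one_mem ⟨1, by rw [mem_coe, mem_Icc]; omega, sres_one hn'⟩
  rw [hW_eq, rank_cayleyLaplacian hgen, Fintype.card_fin]

/-- The circulant matrix whose j-th column is
`(m−1)·e_{s_j} − e_{s_{j+1}} − ⋯ − e_{s_{j+m−1}}` has rank `n − 1`. -/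
theorem stmt_13 (n m : ℕ) (hn : 2 ≤ n) (hm : 2 ≤ m)
    (hn' : 0 < n)
    (W : Matrix (Fin n) (Fin n) ℝ)
    (hW : ∀ j : Fin n, (fun i => W i j) =
      ((m - 1 : ℕ) : ℝ) • (Pi.single (sres n hn' (j : ℕ)) (1 : ℝ) : Fin n → ℝ) -
        ∑ l ∈ Finset.Icc 1 (m - 1),
          (Pi.single (sres n hn' ((j : ℕ) + l)) (1 : ℝ) : Fin n → ℝ)) :
    W.rank = n - 1 :=
  stmt_13_general n m hm hn' W hW
end

section
/- Let A ∈ ℝ^(n^m) with m ≥ 2 and suppose (x, λ) is a tropical H-eigenpair of A. If y ∈ ℝ^(n^m) satisfies y ≥ 0, Σ y_{i1...im} = 1, and Σ y_{i1...im}·((m−1)e_{i1} − e_{i2} − ... − e_{im}) = 0, then λ ≤ Σ_{(i1,...,im)} a_{i1...im}·y_{i1...im}. -/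
/-- Weak duality: the tropical H-eigenvalue is a lower bound for the linear
functional given by the tensor `A` on every point of the H-cycle polytope.
A tensor of order `k+1 ≥ 2` is `A : Fin n → (Fin k → Fin n) → ℝ`. -/
theorem stmt_15 (n k : ℕ) (hn : 0 < n) (hk : 1 ≤ k)
    (A : Fin n → (Fin k → Fin n) → ℝ) (x : Fin n → ℝ) (lam : ℝ)
    (heig : ∀ i : Fin n,
      Finset.univ.inf' ⟨fun _ => ⟨0, hn⟩, Finset.mem_univ _⟩
        (fun t : Fin k → Fin n => A i t + ∑ j, x (t j)) = lam + (k : ℝ) * x i)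
    (y : Fin n → (Fin k → Fin n) → ℝ)
    (hpos : ∀ i t, 0 ≤ y i t)
    (hsum : (∑ i : Fin n, ∑ t : Fin k → Fin n, y i t) = 1)
    (hbal : (∑ i : Fin n, ∑ t : Fin k → Fin n, y i t •
        ((k : ℝ) • (Pi.single i (1 : ℝ) : Fin n → ℝ) -
          ∑ j, (Pi.single (t j) (1 : ℝ) : Fin n → ℝ))) = (0 : Fin n → ℝ)) :
    lam ≤ ∑ i : Fin n, ∑ t : Fin k → Fin n, A i t * y i t := by
  have key : ∀ (i : Fin n) (t : Fin k → Fin n),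
      lam + (k : ℝ) * x i ≤ A i t + ∑ j, x (t j) := by
    intro i t
    rw [← heig i]
    exact Finset.inf'_le _ (Finset.mem_univ t)
  have hbal' : (∑ i : Fin n, ∑ t : Fin k → Fin n,
      y i t * ((k : ℝ) * x i - ∑ j, x (t j))) = 0 := by
    have h := congrArg (fun f : Fin n → ℝ => ∑ p, f p * x p) hbal
    simp only [Finset.sum_apply, Pi.smul_apply, Pi.sub_apply, Pi.zero_apply,
      smul_eq_mul, Pi.single_apply, zero_mul, Finset.sum_const_zero] at h
    calc (∑ i : Fin n, ∑ t : Fin k → Fin n, y i t * ((k : ℝ) * x i - ∑ j, x (t j)))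
        = ∑ i : Fin n, ∑ t : Fin k → Fin n, ∑ p : Fin n,
            y i t * ((↑k * if p = i then (1:ℝ) else 0)
              - ∑ j, if p = t j then (1:ℝ) else 0) * x p := by
          refine Finset.sum_congr rfl fun i _ => Finset.sum_congr rfl fun t _ => ?_
          have h1 : ∑ p, (if p = i then (1:ℝ) else 0) * x p = x i := by
            simp [Finset.sum_ite_eq']
          have h2 : ∀ j : Fin k, ∑ p, (if p = t j then (1:ℝ) else 0) * x p = x (t j) := by
            intro j; simp [Finset.sum_ite_eq']
          rw [← h1]
          have h2' : (∑ j, x (t j)) = ∑ p : Fin n, ∑ j : Fin k,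
              (if p = t j then (1:ℝ) else 0) * x p := by
            rw [Finset.sum_comm]; exact Finset.sum_congr rfl fun j _ => (h2 j).symm
          rw [h2', Finset.mul_sum, ← Finset.sum_sub_distrib, Finset.mul_sum]
          refine Finset.sum_congr rfl fun p _ => ?_
          simp only [sub_mul, Finset.sum_mul, mul_assoc]
      _ = ∑ p : Fin n, (∑ i : Fin n, ∑ t : Fin k → Fin n,
            y i t * ((↑k * if p = i then (1:ℝ) else 0)
              - ∑ j, if p = t j then (1:ℝ) else 0)) * x p := by
          refine Eq.symm ?_
          have e1 : (∑ p : Fin n, (∑ i : Fin n, ∑ t : Fin k → Fin n,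
              y i t * ((↑k * if p = i then (1:ℝ) else 0)
                - ∑ j, if p = t j then (1:ℝ) else 0)) * x p)
              = ∑ p : Fin n, ∑ i : Fin n, ∑ t : Fin k → Fin n,
              y i t * ((↑k * if p = i then (1:ℝ) else 0)
                - ∑ j, if p = t j then (1:ℝ) else 0) * x p :=
            Finset.sum_congr rfl fun p _ => by simp only [Finset.sum_mul]
          rw [e1, Finset.sum_comm]
          exact Finset.sum_congr rfl fun i _ => Finset.sum_comm
      _ = 0 := h
  have step : ∀ (i : Fin n) (t : Fin k → Fin n),
      lam * y i t + y i t * ((k : ℝ) * x i - ∑ j, x (t j)) ≤ A i t * y i t := by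
    intro i t
    have := mul_le_mul_of_nonneg_right (key i t) (hpos i t)
    nlinarith [this]
  calc lam = lam * (∑ i : Fin n, ∑ t : Fin k → Fin n, y i t)
        + (∑ i : Fin n, ∑ t : Fin k → Fin n,
            y i t * ((k : ℝ) * x i - ∑ j, x (t j))) := by rw [hsum, hbal']; ring
    _ = ∑ i : Fin n, ∑ t : Fin k → Fin n,
          (lam * y i t + y i t * ((k : ℝ) * x i - ∑ j, x (t j))) := by
        simp [Finset.mul_sum, Finset.sum_add_distrib]
    _ ≤ ∑ i : Fin n, ∑ t : Fin k → Fin n, A i t * y i t := by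
        refine Finset.sum_le_sum fun i _ => Finset.sum_le_sum fun t _ => step i t
end

section
/- Let A ∈ ℝ^(n^m) with m ≥ 2 and let (x, λ) be a tropical H-eigenpair of A. Then there exists y in the H-cycle polytope H_{n,m} (y ≥ 0, coordinates summing to 1, satisfying the balance condition) with λ = Σ a_{i1...im}·y_{i1...im}. Hence λ equals the minimum of the linear functional y ↦ Σ a_{i1...im} y_{i1...im} over H_{n,m}. -/
/-!
For each `i` pick a tuple `f i` attaining the minimum in the eigen-equation. The random walk
that moves from `i` to `f i j` for a uniformly random `j` has a stationary distribution `w`: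
Cesàro averages of its iterates accumulate, on the compact simplex, at a fixed point. Putting
mass `w i` on `(i, f i)` gives a point of the H-cycle polytope, its balance equations being
exactly the stationarity of `w`. Pairing the balance condition of any `y` in the polytope with
`x` shows `∑ a y = λ + ∑ y (a_{i t} + ∑ x_{t_j} - λ - (m - 1) x_i) ≥ λ`, with equality when `y`
is supported on minimizing pairs.
-/

open Finset Filter Topology Set Matrix

theorem IsCompact.exists_isFixedPt_of_convex_of_mapsTo {E : Type*} [NormedAddCommGroup E]
    [NormedSpace ℝ E] {K : Set E} (hK : IsCompact K) (hKc : Convex ℝ K) (hne : K.Nonempty)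
    (T : E →L[ℝ] E) (hT : MapsTo T K K) : ∃ w ∈ K, T w = w := by
  obtain ⟨u, hu⟩ := hne
  set avg : ℕ → E := fun N => ∑ t ∈ range (N + 1), ((N : ℝ) + 1)⁻¹ • T^[t] u
  have hiter : ∀ t, T^[t] u ∈ K := fun t => hT.iterate t hu
  have havg : ∀ N, avg N ∈ K := fun N =>
    hKc.sum_mem (fun _ _ => by positivity)
      (by simp only [sum_const, card_range, nsmul_eq_mul, Nat.cast_add, Nat.cast_one]; field_simp)
      (fun t _ => hiter t)
  have hdrift : ∀ N, T (avg N) - avg N = ((N : ℝ) + 1)⁻¹ • (T^[N + 1] u - u) := by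
    intro N
    simp only [avg, map_sum, map_smul, ← Function.iterate_succ_apply' T, ← sum_sub_distrib,
      ← smul_sub]
    rw [← smul_sum, sum_range_sub (fun t => T^[t] u), Function.iterate_zero_apply]
  have hlim : Tendsto (fun N => T (avg N) - avg N) atTop (𝓝 0) := by
    refine squeeze_zero_norm (a := fun N : ℕ => 1 / ((N : ℝ) + 1) * Metric.diam K)
      (fun N => ?_) ?_
    · rw [hdrift, norm_smul, Real.norm_of_nonneg (by positivity), one_div, ← dist_eq_norm]
      gcongr
      exact Metric.dist_le_diam_of_mem hK.isBounded (hiter _) hu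
    · simpa using tendsto_one_div_add_atTop_nhds_zero_nat.mul_const (Metric.diam K)
  obtain ⟨w, hwK, φ, hφ, hconv⟩ := hK.tendsto_subseq havg
  refine ⟨w, hwK, sub_eq_zero.mp (tendsto_nhds_unique ?_ (hlim.comp hφ.tendsto_atTop))⟩
  exact ((T.continuous.tendsto w).comp hconv).sub hconv

theorem Matrix.exists_mem_stdSimplex_vecMul_eq_self {ι : Type*} [Fintype ι] [DecidableEq ι]
    [Nonempty ι] {P : Matrix ι ι ℝ} (hP : P ∈ rowStochastic ℝ ι) :
    ∃ w ∈ stdSimplex ℝ ι, w ᵥ* P = w := by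
  refine (isCompact_stdSimplex ℝ ι).exists_isFixedPt_of_convex_of_mapsTo (convex_stdSimplex ℝ ι)
    ⟨_, single_mem_stdSimplex ℝ (Classical.arbitrary ι)⟩
    (LinearMap.toContinuousLinearMap (vecMulLinear P)) fun w hw => ⟨?_, ?_⟩
  · exact nonneg_vecMul_of_mem_rowStochastic hP hw.1
  · have := vecMul_dotProduct_one_eq_one_rowStochastic hP (x := w)
      (by simpa [dotProduct_one] using hw.2)
    simpa [dotProduct_one] using this

section HCyclePolytope

variable {ι : Type*} [Fintype ι] [DecidableEq ι] {k : ℕ}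

/-- The paper's `(m - 1) e_{i₁} - e_{i₂} - ⋯ - e_{iₘ}`, with `k = m - 1`, `i = i₁` and
`t = (i₂, …, iₘ)`. -/
def hBalance (i : ι) (t : Fin k → ι) : ι → ℝ :=
  (k : ℝ) • Pi.single i 1 - ∑ j, Pi.single (t j) 1

variable (ι k) in
def hCyclePolytope : Set (ι → (Fin k → ι) → ℝ) :=
  {y | (∀ i t, 0 ≤ y i t) ∧ ∑ i, ∑ t, y i t = 1 ∧ ∑ i, ∑ t, y i t • hBalance i t = 0}

lemma dotProduct_hBalance (x : ι → ℝ) (i : ι) (t : Fin k → ι) :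
    x ⬝ᵥ hBalance i t = k * x i - ∑ j, x (t j) := by
  simp [hBalance, dotProduct_sub, dotProduct_smul, dotProduct_sum, dotProduct_single, mul_comm]

lemma sum_potential_mul_eq {y : ι → (Fin k → ι) → ℝ} (hy : y ∈ hCyclePolytope ι k)
    (x : ι → ℝ) (lam : ℝ) :
    ∑ i, ∑ t, (lam + k * x i - ∑ j, x (t j)) * y i t = lam := by
  obtain ⟨-, hmass, hbal⟩ := hy
  have hpair := congrArg (x ⬝ᵥ ·) hbal
  simp only [dotProduct_sum, dotProduct_smul, dotProduct_hBalance, dotProduct_zero,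
    smul_eq_mul] at hpair
  calc ∑ i, ∑ t, (lam + k * x i - ∑ j, x (t j)) * y i t
      = lam * ∑ i, ∑ t, y i t + ∑ i, ∑ t, y i t * (k * x i - ∑ j, x (t j)) := by
        simp only [mul_sum, ← sum_add_distrib]
        exact sum_congr rfl fun i _ => sum_congr rfl fun t _ => by ring
    _ = lam := by rw [hmass, hpair, mul_one, add_zero]

variable {A : ι → (Fin k → ι) → ℝ} {x : ι → ℝ} {lam : ℝ} {y : ι → (Fin k → ι) → ℝ}

lemma le_sum_mul_of_mem_hCyclePolytope (hsub : ∀ i t, lam + k * x i ≤ A i t + ∑ j, x (t j))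
    (hy : y ∈ hCyclePolytope ι k) : lam ≤ ∑ i, ∑ t, A i t * y i t := by
  rw [← sum_potential_mul_eq hy x lam]
  gcongr with i _ t _
  · exact hy.1 i t
  · linarith [hsub i t]

lemma sum_mul_eq_of_mem_hCyclePolytope
    (htight : ∀ i t, y i t ≠ 0 → A i t + ∑ j, x (t j) = lam + k * x i)
    (hy : y ∈ hCyclePolytope ι k) : ∑ i, ∑ t, A i t * y i t = lam := by
  conv_rhs => rw [← sum_potential_mul_eq hy x lam]
  refine sum_congr rfl fun i _ => sum_congr rfl fun t _ => ?_
  by_cases h : y i t = 0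
  · simp [h]
  · rw [eq_sub_of_add_eq (htight i t h)]

noncomputable def tupleTransition (f : ι → Fin k → ι) : Matrix ι ι ℝ :=
  fun i => (k : ℝ)⁻¹ • ∑ j, Pi.single (f i j) 1

lemma tupleTransition_mem_rowStochastic (f : ι → Fin k → ι) (hk : k ≠ 0) :
    tupleTransition f ∈ rowStochastic ℝ ι := by
  refine mem_rowStochastic_iff_sum.2 ⟨fun i l => ?_, fun i => ?_⟩
  · simp only [tupleTransition, Pi.smul_apply, Finset.sum_apply, smul_eq_mul, Pi.single_apply]
    exact mul_nonneg (by positivity) (sum_nonneg fun j _ => by split_ifs <;> norm_num)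
  · simp [tupleTransition, ← mul_sum, sum_comm (γ := ι), hk]

def graphWeights (f : ι → Fin k → ι) (w : ι → ℝ) : ι → (Fin k → ι) → ℝ :=
  fun i t => if t = f i then w i else 0

lemma graphWeights_mem_hCyclePolytope {f : ι → Fin k → ι} {w : ι → ℝ} (hk : k ≠ 0)
    (hw : w ∈ stdSimplex ℝ ι) (hstat : w ᵥ* tupleTransition f = w) :
    graphWeights f w ∈ hCyclePolytope ι k := by
  refine ⟨fun i t => ?_, ?_, ?_⟩
  · unfold graphWeights
    split_ifs
    exacts [hw.1 i, le_rfl]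
  · simpa [graphWeights] using hw.2
  · have hrows : ∑ i, w i • ∑ j, (Pi.single (f i j) 1 : ι → ℝ) = (k : ℝ) • w :=
      calc ∑ i, w i • ∑ j, (Pi.single (f i j) 1 : ι → ℝ)
          = (k : ℝ) • (w ᵥ* tupleTransition f) := by
            rw [vecMul_eq_sum, smul_sum]
            refine sum_congr rfl fun i _ => ?_
            rw [tupleTransition, smul_smul, smul_smul]
            congr 1
            field_simp
        _ = (k : ℝ) • w := by rw [hstat]
    simp only [graphWeights, hBalance, smul_sub, ite_smul, zero_smul, sum_sub_distrib,
      sum_ite_eq', Finset.mem_univ, ↓reduceIte, hrows, sub_eq_zero]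
    ext l
    simp [Finset.sum_apply, Pi.single_apply, mul_comm]

end HCyclePolytope

/-- Strong duality realized by the eigenvalue: there is a point `y` of the
H-cycle polytope with `λ = Σ a·y`, and `λ` is the minimum of this linear
functional over the polytope. -/
theorem stmt_16 (n k : ℕ) (hn : 0 < n) (hk : 1 ≤ k)
    (A : Fin n → (Fin k → Fin n) → ℝ) (x : Fin n → ℝ) (lam : ℝ)
    (heig : ∀ i : Fin n,
      Finset.univ.inf' ⟨fun _ => ⟨0, hn⟩, Finset.mem_univ _⟩
        (fun t : Fin k → Fin n => A i t + ∑ j, x (t j)) = lam + (k : ℝ) * x i) :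
    ∃ y : Fin n → (Fin k → Fin n) → ℝ,
      (∀ i t, 0 ≤ y i t) ∧
      (∑ i : Fin n, ∑ t : Fin k → Fin n, y i t) = 1 ∧
      (∑ i : Fin n, ∑ t : Fin k → Fin n, y i t •
          ((k : ℝ) • (Pi.single i (1 : ℝ) : Fin n → ℝ) -
            ∑ j, (Pi.single (t j) (1 : ℝ) : Fin n → ℝ))) = (0 : Fin n → ℝ) ∧
      lam = ∑ i : Fin n, ∑ t : Fin k → Fin n, A i t * y i t ∧
      (∀ y' : Fin n → (Fin k → Fin n) → ℝ,
        (∀ i t, 0 ≤ y' i t) →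
        (∑ i : Fin n, ∑ t : Fin k → Fin n, y' i t) = 1 →
        (∑ i : Fin n, ∑ t : Fin k → Fin n, y' i t •
            ((k : ℝ) • (Pi.single i (1 : ℝ) : Fin n → ℝ) -
              ∑ j, (Pi.single (t j) (1 : ℝ) : Fin n → ℝ))) = (0 : Fin n → ℝ) →
        lam ≤ ∑ i : Fin n, ∑ t : Fin k → Fin n, A i t * y' i t) := by
  have hsub : ∀ i t, lam + k * x i ≤ A i t + ∑ j, x (t j) := fun i t =>
    heig i ▸ inf'_le _ (mem_univ t)
  have hmin : ∀ i, ∃ t, A i t + ∑ j, x (t j) = lam + k * x i := fun i => by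
    obtain ⟨t, -, ht⟩ := exists_mem_eq_inf' _ (fun t : Fin k → Fin n => A i t + ∑ j, x (t j))
    exact ⟨t, ht ▸ heig i⟩
  choose f hf using hmin
  have : Nonempty (Fin n) := ⟨⟨0, hn⟩⟩
  have hk0 : k ≠ 0 := Nat.one_le_iff_ne_zero.mp hk
  obtain ⟨w, hw, hstat⟩ :=
    exists_mem_stdSimplex_vecMul_eq_self (tupleTransition_mem_rowStochastic f hk0)
  have hy := graphWeights_mem_hCyclePolytope hk0 hw hstat
  refine ⟨graphWeights f w, hy.1, hy.2.1, hy.2.2, ?_, fun y' hy0 hy1 hybal =>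
    le_sum_mul_of_mem_hCyclePolytope hsub ⟨hy0, hy1, hybal⟩⟩
  refine (sum_mul_eq_of_mem_hCyclePolytope (x := x) (fun i t ht => ?_) hy).symm
  obtain rfl : t = f i := by_contra fun h => ht (if_neg h)
  exact hf i
end
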